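/- Let D be a Steiner 2-design S(2,k,v) with a near parallel class, let G_1 be its 1-block intersection graph, and let I be a maximum independent set of G_1 (so |I| = (v-1)/k, the blocks of I covering all points except one). Then every vertex of V(G_1) \ I is adjacent to either k-1 or k vertices of I; exactly (v-1)/(k-1) vertices outside I have exactly k-1 neighbors in I, and exactly (v-1)(v-2k+1)/(k(k-1)) vertices outside I have exactly k neighbors in I. -/

import Mathlib

open Finset

variable {α : Type*}

/-- A Steiner 2-design `S(2,k,v)`: the point set has `v` points, every block has
`k` points, and every pair of distinct points lies in exactly one block. -/
def IsSteiner [Fintype α] [DecidableEq α] (v k : ℕ) (B : Finset (Finset α)) : Prop :=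
  Fintype.card α = v ∧ (∀ b ∈ B, b.card = k) ∧
    ∀ x y : α, x ≠ y → (B.filter fun b => x ∈ b ∧ y ∈ b).card = 1

/-- The `i`-block intersection graph: vertices are the blocks of `B`, two blocks
adjacent iff they intersect in exactly `i` points. -/
def BIG [DecidableEq α] (i : ℕ) (B : Finset (Finset α)) :
    SimpleGraph {b : Finset α // b ∈ B} where
  Adj b₁ b₂ := b₁ ≠ b₂ ∧ ((b₁ : Finset α) ∩ (b₂ : Finset α)).card = i
  symm := ⟨fun a b ⟨h1, h2⟩ => ⟨h1.symm, by rwa [Finset.inter_comm]⟩⟩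
  loopless := ⟨fun a ⟨h, _⟩ => h rfl⟩

instance [DecidableEq α] (i : ℕ) (B : Finset (Finset α)) :
    DecidableRel (BIG (α := α) i B).Adj := fun b₁ b₂ =>
  show Decidable (b₁ ≠ b₂ ∧ _) from instDecidableAnd

/-- `I` is a maximum independent set of `G`. -/
def IsMaxIndep {V : Type*} (G : SimpleGraph V) (I : Finset V) : Prop :=
  (∀ a ∈ I, ∀ b ∈ I, ¬ G.Adj a b) ∧
    ∀ J : Finset V, (∀ a ∈ J, ∀ b ∈ J, ¬ G.Adj a b) → J.card ≤ I.card

/-- A silver coloring of the `r`-regular graph `G` with respect to `I`: a proper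
`(r+1)`-coloring under which every vertex of `I` is rainbow (all `r+1` colors
appear on its closed neighborhood). -/
def SilverWith {V : Type*} (G : SimpleGraph V) (r : ℕ) (I : Finset V) : Prop :=
  ∃ c : V → Fin (r + 1), (∀ a b, G.Adj a b → c a ≠ c b) ∧
    ∀ x ∈ I, ∀ col : Fin (r + 1), ∃ y, (y = x ∨ G.Adj x y) ∧ c y = col

/-- `G` is silver: some silver coloring exists with respect to some maximum
independent set. -/
def IsSilver {V : Type*} (G : SimpleGraph V) (r : ℕ) : Prop :=
  ∃ I : Finset V, IsMaxIndep G I ∧ SilverWith G r I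

/-- A near parallel class: pairwise disjoint blocks of `B` covering every point
except exactly one. -/
def IsNearParallelClass [DecidableEq α] (B P : Finset (Finset α)) : Prop :=
  P ⊆ B ∧ (∀ b₁ ∈ P, ∀ b₂ ∈ P, b₁ ≠ b₂ → b₁ ∩ b₂ = ∅) ∧
    ∃ x : α, ∀ y : α, (∃ b ∈ P, y ∈ b) ↔ y ≠ x

/-!
Two blocks of a Steiner 2-design meet in at most one point, so an independent set of `G₁` is a
family of pairwise disjoint blocks. Comparing with the near parallel class, a maximum one covers
all points but one, `x₀`. A block `b ∉ I` meets each block of `I` in at most one point, so its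
number of neighbours in `I` is `|b \ {x₀}|`: `k - 1` for the `r = (v-1)/(k-1)` blocks through
`x₀` and `k` for the others. The second count is then `|B| - |I| - r`, with
`|B| = v(v-1)/(k(k-1))` and `|I| = (v-1)/k`.
-/

lemma Finset.card_filter_univ_subtype {β : Type*} (s : Finset β) (p : β → Prop)
    [DecidablePred p] :
    (univ.filter fun x : {x // x ∈ s} => p x).card = (s.filter p).card := by
  rw [card_filter, card_filter, univ_eq_attach, sum_attach s fun x => if p x then 1 else 0]

lemma Finset.notMem_of_biUnion_eq_erase {ι β : Type*} [DecidableEq β] {s : Finset ι}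
    {f : ι → Finset β} {t : Finset β} {x : β} (h : s.biUnion f = t.erase x) {i : ι} (hi : i ∈ s) :
    x ∉ f i := fun hx => notMem_erase x t (h ▸ mem_biUnion.mpr ⟨i, hi, hx⟩)

lemma Nat.mul_pred_mul_eq_of_block_counts {v k b i r n : ℕ} (hk : 0 < k)
    (hb : b * (k * (k - 1)) = v * (v - 1)) (hi : k * i + 1 = v) (hr : r * (k - 1) = v - 1)
    (hpart : r + n + i = b) :
    n * (k * (k - 1)) = (v - 1) * (v + 1 - 2 * k) := by
  obtain ⟨j, rfl⟩ := Nat.exists_eq_add_one_of_ne_zero hk.ne'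
  subst hi
  simp only [Nat.add_sub_cancel] at hb hr ⊢
  rw [Nat.mul_sub]
  refine Nat.eq_sub_of_add_eq ?_
  linear_combination (j + 1) * j * hpart + hb - (j + 1) * hr

namespace IsSteiner

variable [Fintype α] [DecidableEq α] {v k : ℕ} {B : Finset (Finset α)}

lemma eq_of_mem_of_mem (hD : IsSteiner v k B) {x y : α} (hxy : x ≠ y) {b₁ b₂ : Finset α}
    (h₁ : b₁ ∈ B) (hx₁ : x ∈ b₁) (hy₁ : y ∈ b₁) (h₂ : b₂ ∈ B) (hx₂ : x ∈ b₂) (hy₂ : y ∈ b₂) :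
    b₁ = b₂ :=
  card_le_one.mp (hD.2.2 x y hxy).le b₁ (mem_filter.mpr ⟨h₁, hx₁, hy₁⟩)
    b₂ (mem_filter.mpr ⟨h₂, hx₂, hy₂⟩)

lemma exists_block (hD : IsSteiner v k B) {x y : α} (hxy : x ≠ y) :
    ∃ b ∈ B, x ∈ b ∧ y ∈ b := by
  obtain ⟨b, hb⟩ := card_pos.mp (hD.2.2 x y hxy ▸ Nat.one_pos)
  exact ⟨b, (mem_filter.mp hb).1, (mem_filter.mp hb).2⟩

lemma card_inter_le_one (hD : IsSteiner v k B) {b₁ b₂ : Finset α} (h₁ : b₁ ∈ B) (h₂ : b₂ ∈ B)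
    (hne : b₁ ≠ b₂) : (b₁ ∩ b₂).card ≤ 1 := by
  refine card_le_one.mpr fun x hx y hy => ?_
  by_contra hxy
  rw [mem_inter] at hx hy
  exact hne (hD.eq_of_mem_of_mem hxy h₁ hx.1 hy.1 h₂ hx.2 hy.2)

lemma card_filter_mem_mul (hD : IsSteiner v k B) (x : α) :
    (B.filter (x ∈ ·)).card * (k - 1) = v - 1 := by
  have hunion : (B.filter (x ∈ ·)).biUnion (·.erase x) = univ.erase x := by
    ext y
    simp only [mem_biUnion, mem_filter, mem_erase, mem_univ, and_true]
    refine ⟨fun ⟨_, _, hyx, _⟩ => hyx, fun hyx => ?_⟩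
    obtain ⟨b, hb, hxb, hyb⟩ := hD.exists_block (Ne.symm hyx)
    exact ⟨b, ⟨hb, hxb⟩, hyx, hyb⟩
  have hdisj : (B.filter (x ∈ ·) : Set (Finset α)).PairwiseDisjoint (·.erase x) := by
    intro b₁ h₁ b₂ h₂ hne
    simp only [coe_filter, Set.mem_ofPred_eq] at h₁ h₂
    refine disjoint_left.mpr fun y hy₁ hy₂ => ?_
    rw [mem_erase] at hy₁ hy₂
    exact hne (hD.eq_of_mem_of_mem (Ne.symm hy₁.1) h₁.1 h₁.2 hy₁.2 h₂.1 h₂.2 hy₂.2)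
  rw [← hD.1, ← card_univ, ← card_erase_of_mem (mem_univ x), ← hunion, card_biUnion hdisj,
    sum_const_nat]
  intro b hb
  rw [mem_filter] at hb
  rw [card_erase_of_mem hb.2, hD.2.1 b hb.1]

lemma card_mul (hD : IsSteiner v k B) (hk : 1 < k) : B.card * (k * (k - 1)) = v * (v - 1) := by
  have hr : ∀ x, (B.filter (x ∈ ·)).card = (v - 1) / (k - 1) := fun x =>
    (Nat.div_eq_of_eq_mul_left (by omega) (hD.card_filter_mem_mul x).symm).symm
  have hsum : B.card * k = v * ((v - 1) / (k - 1)) := by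
    rw [← sum_const_nat fun b hb => hD.2.1 b hb, sum_card hr, hD.1]
  rw [← mul_assoc, hsum, mul_assoc]
  rcases Nat.eq_zero_or_pos v with rfl | hv
  · rw [zero_mul, zero_mul]
  obtain ⟨x⟩ := Fintype.card_pos_iff.mp (hD.1 ▸ hv)
  rw [Nat.div_mul_cancel (Dvd.intro_left _ (hD.card_filter_mem_mul x))]

lemma disjoint_of_not_adj (hD : IsSteiner v k B) {a b : {b // b ∈ B}} (hne : a ≠ b)
    (h : ¬(BIG 1 B).Adj a b) : Disjoint (a : Finset α) b := by
  have hle := hD.card_inter_le_one a.2 b.2 (Subtype.coe_injective.ne hne)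
  have hne1 : ((a : Finset α) ∩ b).card ≠ 1 := fun h1 => h ⟨hne, h1⟩
  rw [disjoint_iff_inter_eq_empty, ← card_eq_zero]
  omega

variable {J I : Finset {b // b ∈ B}}

lemma pairwiseDisjoint_of_indep (hD : IsSteiner v k B)
    (hJ : ∀ a ∈ J, ∀ b ∈ J, ¬(BIG 1 B).Adj a b) :
    (J : Set {b // b ∈ B}).PairwiseDisjoint Subtype.val :=
  fun a ha b hb hne => hD.disjoint_of_not_adj hne (hJ a ha b hb)

lemma card_biUnion_of_indep (hD : IsSteiner v k B) (hJ : ∀ a ∈ J, ∀ b ∈ J, ¬(BIG 1 B).Adj a b) :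
    (J.biUnion Subtype.val).card = k * J.card := by
  rw [card_biUnion (hD.pairwiseDisjoint_of_indep hJ), sum_const_nat fun b _ => hD.2.1 _ b.2,
    mul_comm]

lemma exists_indep_of_isNearParallelClass (hD : IsSteiner v k B) {P : Finset (Finset α)}
    (hP : IsNearParallelClass B P) :
    ∃ J : Finset {b // b ∈ B}, (∀ a ∈ J, ∀ b ∈ J, ¬(BIG 1 B).Adj a b) ∧ k * J.card + 1 = v := by
  obtain ⟨hPB, hdisj, x, hcover⟩ := hP
  set J := P.subtype (· ∈ B)
  have hJ : ∀ a ∈ J, ∀ b ∈ J, ¬(BIG 1 B).Adj a b := by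
    rintro a ha b hb ⟨hne, h1⟩
    rw [mem_subtype] at ha hb
    rw [hdisj _ ha _ hb (Subtype.coe_injective.ne hne), card_empty] at h1
    exact zero_ne_one h1
  have hunion : J.biUnion Subtype.val = univ.erase x := by
    ext y
    simp only [mem_biUnion, mem_subtype, J, mem_erase, mem_univ, and_true, ← hcover y]
    exact ⟨fun ⟨b, hb, hyb⟩ => ⟨b, hb, hyb⟩, fun ⟨b, hb, hyb⟩ => ⟨⟨b, hPB hb⟩, hb, hyb⟩⟩
  refine ⟨J, hJ, ?_⟩
  rw [← hD.card_biUnion_of_indep hJ, hunion, card_erase_add_one (mem_univ x), card_univ, hD.1]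

lemma mul_card_add_one_of_isMaxIndep (hD : IsSteiner v k B) (hk : 1 < k)
    (hNPC : ∃ P : Finset (Finset α), IsNearParallelClass B P) (hI : IsMaxIndep (BIG 1 B) I) :
    k * I.card + 1 = v := by
  obtain ⟨P, hP⟩ := hNPC
  obtain ⟨J, hJ, hJv⟩ := hD.exists_indep_of_isNearParallelClass hP
  have hJI : J.card ≤ I.card := hI.2 J hJ
  have hIv : k * I.card ≤ v := by
    rw [← hD.card_biUnion_of_indep hI.1, ← hD.1]
    exact card_le_univ _
  have hIJ : I.card ≤ J.card :=
    Nat.lt_succ_iff.mp (Nat.lt_of_mul_lt_mul_left (a := k) (by rw [Nat.mul_succ]; omega))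
  rw [le_antisymm hIJ hJI, hJv]

lemma exists_biUnion_eq_erase_of_isMaxIndep (hD : IsSteiner v k B) (hk : 1 < k)
    (hNPC : ∃ P : Finset (Finset α), IsNearParallelClass B P) (hI : IsMaxIndep (BIG 1 B) I) :
    ∃ x₀, I.biUnion Subtype.val = univ.erase x₀ := by
  have hcard : (I.biUnion Subtype.val).card + 1 = (univ : Finset α).card := by
    rw [hD.card_biUnion_of_indep hI.1, hD.mul_card_add_one_of_isMaxIndep hk hNPC hI, card_univ,
      hD.1]
  obtain ⟨x₀, hx₀, hinsert⟩ := exists_eq_insert_iff.mpr ⟨subset_univ _, hcard⟩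
  exact ⟨x₀, by rw [← hinsert, erase_insert hx₀]⟩

lemma card_filter_adj_of_indep (hD : IsSteiner v k B) (hI : ∀ a ∈ I, ∀ b ∈ I, ¬(BIG 1 B).Adj a b)
    {b : {b // b ∈ B}} (hb : b ∉ I) :
    (I.filter fun c => (BIG 1 B).Adj b c).card = ((b : Finset α) ∩ I.biUnion Subtype.val).card := by
  rw [inter_biUnion,
    card_biUnion ((hD.pairwiseDisjoint_of_indep hI).mono fun c => inter_subset_right), card_filter]
  refine sum_congr rfl fun c hc => ?_
  have hne : b ≠ c := (ne_of_mem_of_not_mem hc hb).symm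
  have hle := hD.card_inter_le_one b.2 c.2 (Subtype.coe_injective.ne hne)
  by_cases h1 : ((b : Finset α) ∩ c).card = 1
  · rw [if_pos ⟨hne, h1⟩, h1]
  · rw [if_neg fun h => h1 h.2]
    omega

lemma card_filter_adj_eq_ite (hD : IsSteiner v k B) (hI : ∀ a ∈ I, ∀ b ∈ I, ¬(BIG 1 B).Adj a b)
    {x₀ : α} (hx₀ : I.biUnion Subtype.val = univ.erase x₀) {b : {b // b ∈ B}} (hb : b ∉ I) :
    (I.filter fun c => (BIG 1 B).Adj b c).card = if x₀ ∈ (b : Finset α) then k - 1 else k := by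
  rw [hD.card_filter_adj_of_indep hI hb, hx₀, inter_erase, inter_univ, card_erase_eq_ite,
    hD.2.1 _ b.2]

lemma filter_card_adj_eq_pred (hD : IsSteiner v k B) (hk : 0 < k)
    (hI : ∀ a ∈ I, ∀ b ∈ I, ¬(BIG 1 B).Adj a b) {x₀ : α}
    (hx₀ : I.biUnion Subtype.val = univ.erase x₀) :
    univ.filter (fun b => b ∉ I ∧ (I.filter fun c => (BIG 1 B).Adj b c).card = k - 1)
      = univ.filter fun b : {b // b ∈ B} => x₀ ∈ (b : Finset α) := by
  ext b
  simp only [mem_filter, mem_univ, true_and]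
  constructor
  · rintro ⟨hb, hcard⟩
    rw [hD.card_filter_adj_eq_ite hI hx₀ hb] at hcard
    split_ifs at hcard with hxb
    · exact hxb
    · omega
  · intro hxb
    have hb : b ∉ I := fun hb => notMem_of_biUnion_eq_erase hx₀ hb hxb
    rw [hD.card_filter_adj_eq_ite hI hx₀ hb, if_pos hxb]
    exact ⟨hb, rfl⟩

lemma filter_card_adj_eq_self (hD : IsSteiner v k B) (hk : 0 < k)
    (hI : ∀ a ∈ I, ∀ b ∈ I, ¬(BIG 1 B).Adj a b) {x₀ : α}
    (hx₀ : I.biUnion Subtype.val = univ.erase x₀) :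
    univ.filter (fun b => b ∉ I ∧ (I.filter fun c => (BIG 1 B).Adj b c).card = k)
      = (univ.filter fun b : {b // b ∈ B} => x₀ ∉ (b : Finset α)) \ I := by
  ext b
  simp only [mem_filter, mem_sdiff, mem_univ, true_and]
  refine ⟨fun ⟨hb, hcard⟩ => ⟨?_, hb⟩, fun ⟨hxb, hb⟩ => ⟨hb, ?_⟩⟩
  · rw [hD.card_filter_adj_eq_ite hI hx₀ hb] at hcard
    split_ifs at hcard with hxb
    · omega
    · exact hxb
  · rw [hD.card_filter_adj_eq_ite hI hx₀ hb, if_neg hxb]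

end IsSteiner

theorem stmt5_general [Fintype α] [DecidableEq α] (v k : ℕ) (B : Finset (Finset α))
    (hk : 2 < k) (hD : IsSteiner v k B)
    (hNPC : ∃ P : Finset (Finset α), IsNearParallelClass B P)
    (I : Finset {b : Finset α // b ∈ B}) (hI : IsMaxIndep (BIG 1 B) I) :
    (∀ b : {b : Finset α // b ∈ B}, b ∉ I →
        (I.filter fun c => (BIG 1 B).Adj b c).card = k - 1 ∨
        (I.filter fun c => (BIG 1 B).Adj b c).card = k) ∧
    (Finset.univ.filter fun b : {b : Finset α // b ∈ B} =>
        b ∉ I ∧ (I.filter fun c => (BIG 1 B).Adj b c).card = k - 1).card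
      = (v - 1) / (k - 1) ∧
    (Finset.univ.filter fun b : {b : Finset α // b ∈ B} =>
        b ∉ I ∧ (I.filter fun c => (BIG 1 B).Adj b c).card = k).card
      = (v - 1) * (v + 1 - 2 * k) / (k * (k - 1)) := by
  have hk₁ : 1 < k := by omega
  obtain ⟨x₀, hx₀⟩ := hD.exists_biUnion_eq_erase_of_isMaxIndep hk₁ hNPC hI
  have hr := hD.card_filter_mem_mul x₀
  rw [hD.filter_card_adj_eq_pred (by omega) hI.1 hx₀,
    hD.filter_card_adj_eq_self (by omega) hI.1 hx₀, card_filter_univ_subtype B (x₀ ∈ ·)]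
  have hIsub : I ⊆ univ.filter fun b : {b // b ∈ B} => x₀ ∉ (b : Finset α) := fun c hc =>
    mem_filter.mpr ⟨mem_univ c, notMem_of_biUnion_eq_erase hx₀ hc⟩
  have hpart : (B.filter (x₀ ∈ ·)).card
      + ((univ.filter fun b : {b // b ∈ B} => x₀ ∉ (b : Finset α)) \ I).card + I.card = B.card := by
    rw [card_sdiff_of_subset hIsub, ← card_filter_univ_subtype B (x₀ ∈ ·), add_assoc,
      Nat.sub_add_cancel (card_le_card hIsub), card_filter_add_card_filter_not, card_univ,
      Fintype.card_coe]
  refine ⟨fun b hb => ?_, (Nat.div_eq_of_eq_mul_left (by omega) hr.symm).symm,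
    (Nat.div_eq_of_eq_mul_left (Nat.mul_pos (by omega) (by omega)) ?_).symm⟩
  · rw [hD.card_filter_adj_eq_ite hI.1 hx₀ hb]
    split_ifs <;> simp
  · exact (Nat.mul_pred_mul_eq_of_block_counts (by omega) (hD.card_mul hk₁)
      (hD.mul_card_add_one_of_isMaxIndep hk₁ hNPC hI) hr hpart).symm

/-- In an `S(2,k,v)` with a near parallel class, given a maximum independent set
`I` of the 1-block intersection graph: every vertex outside `I` has exactly
`k-1` or `k` neighbors in `I`; exactly `(v-1)/(k-1)` outside vertices have `k-1`
neighbors in `I`, and exactly `(v-1)(v-2k+1)/(k(k-1))` have `k` neighbors. -/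
theorem stmt5 [Fintype α] [DecidableEq α] (v k : ℕ) (B : Finset (Finset α))
    (hk : 2 < k) (hkv : k < v) (hD : IsSteiner v k B)
    (hNPC : ∃ P : Finset (Finset α), IsNearParallelClass B P)
    (I : Finset {b : Finset α // b ∈ B}) (hI : IsMaxIndep (BIG 1 B) I) :
    (∀ b : {b : Finset α // b ∈ B}, b ∉ I →
        (I.filter fun c => (BIG 1 B).Adj b c).card = k - 1 ∨
        (I.filter fun c => (BIG 1 B).Adj b c).card = k) ∧
    (Finset.univ.filter fun b : {b : Finset α // b ∈ B} =>
        b ∉ I ∧ (I.filter fun c => (BIG 1 B).Adj b c).card = k - 1).card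
      = (v - 1) / (k - 1) ∧
    (Finset.univ.filter fun b : {b : Finset α // b ∈ B} =>
        b ∉ I ∧ (I.filter fun c => (BIG 1 B).Adj b c).card = k).card
      = (v - 1) * (v + 1 - 2 * k) / (k * (k - 1)) :=
  stmt5_general v k B hk hD hNPC I hI
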